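/- Assume every instance with n−1 voters is integralizable. Then in any minimal counterexample (c,k,u) with n voters, the intersection of all present candidate types is empty, and every voter i satisfies 1 ≤ u_i ≤ k−1. -/

import Mathlib

/-- Candidate types: non-empty subsets of the voter set `Fin n`. -/
abbrev Typ (n : ℕ) := {S : Finset (Fin n) // S.Nonempty}

/-- Utility of voter `i` under an integral committee `x`. -/
def intUtil {n : ℕ} (x : Typ n → ℕ) (i : Fin n) : ℤ :=
  ∑ R : Typ n, if i ∈ R.1 then (x R : ℤ) else 0

/-- Utility of voter `i` under a fractional committee `x`. -/
def fracUtil {n : ℕ} (x : Typ n → ℝ) (i : Fin n) : ℝ :=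
  ∑ R : Typ n, if i ∈ R.1 then x R else 0

/-- `x` is an integral committee for the instance `(c, k)`. -/
def IsIntCommittee {n : ℕ} (c : Typ n → ℕ) (k : ℕ) (x : Typ n → ℕ) : Prop :=
  (∀ R, x R ≤ c R) ∧ (∑ R : Typ n, x R) ≤ k

/-- `x` is a fractional committee for the instance `(c, k)`. -/
def IsFracCommittee {n : ℕ} (c : Typ n → ℕ) (k : ℕ) (x : Typ n → ℝ) : Prop :=
  (∀ R, 0 ≤ x R) ∧ (∀ R, x R ≤ (c R : ℝ)) ∧ (∑ R : Typ n, x R) ≤ (k : ℝ)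

/-- `u` is integral-committee-feasible in `(c, k)`. -/
def IntFeasible {n : ℕ} (c : Typ n → ℕ) (k : ℕ) (u : Fin n → ℤ) : Prop :=
  ∃ x : Typ n → ℕ, IsIntCommittee c k x ∧ ∀ i, u i ≤ intUtil x i

/-- `u` is fractional-committee-feasible in `(c, k)`. -/
def FracFeasible {n : ℕ} (c : Typ n → ℕ) (k : ℕ) (u : Fin n → ℤ) : Prop :=
  ∃ x : Typ n → ℝ, IsFracCommittee c k x ∧ ∀ i, (u i : ℝ) ≤ fracUtil x i

/-- `(c, k)` is integralizable. -/
def Integralizable {n : ℕ} (c : Typ n → ℕ) (k : ℕ) : Prop :=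
  ∀ u : Fin n → ℤ, FracFeasible c k u → IntFeasible c k u

/-- `(c, k, u)` is a counterexample to integralizability. -/
def Counterexample {n : ℕ} (c : Typ n → ℕ) (k : ℕ) (u : Fin n → ℤ) : Prop :=
  FracFeasible c k u ∧ ¬ IntFeasible c k u

/-- `(c, k, u)` is a minimal counterexample. -/
def MinimalCE {n : ℕ} (c : Typ n → ℕ) (k : ℕ) (u : Fin n → ℤ) : Prop :=
  Counterexample c k u ∧
  (∀ k' : ℕ, k' < k → ∀ u' : Fin n → ℤ, ¬ Counterexample c k' u') ∧
  (∀ c' : Typ n → ℕ, (∀ R, c' R ≤ c R) → (∃ R, c' R < c R) →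
    ∀ u' : Fin n → ℤ, ¬ Counterexample c' k u')

/-!
Deleting voter `i` projects an instance onto the remaining voters (a type `S` becomes `S \ {i}`,
and types that become empty are dropped); a fractional committee projects to one giving every
other voter the same utility, and an integral committee of the projection lifts seat by seat back
to the original supply. Integralizability with one voter fewer therefore satisfies every voter
except `i` integrally. If `u i ≤ 0` this satisfies everybody; if every present type contains `i`,
padding the lifted committee to `min k (∑ c)` seats satisfies `i` too. Finally, if `u i ≥ k`, a
fractional witness spends its whole budget on types containing `i`, so a present type avoiding
`i` carries no weight and can be removed from the supply, contradicting minimality.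
-/

open Finset

lemma Finset.exists_le_sum_eq {α : Type*} [DecidableEq α] (s : Finset α) (c : α → ℕ) {t : ℕ}
    (ht : t ≤ ∑ a ∈ s, c a) : ∃ y ≤ c, ∑ a ∈ s, y a = t := by
  induction s using Finset.induction_on generalizing t with
  | empty => exact ⟨0, fun _ => Nat.zero_le _, by simp_all⟩
  | @insert a s ha ih =>
    rw [sum_insert ha] at ht
    obtain ⟨y, hyc, hyt⟩ := ih (t := t - min t (c a)) (by omega)
    refine ⟨Function.update y a (min t (c a)), fun b => ?_, ?_⟩
    · rcases eq_or_ne b a with rfl | hb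
      · simp
      · simpa [hb] using hyc b
    · rw [sum_insert ha, sum_update_of_notMem ha, hyt, Function.update_self]
      omega

lemma Finset.exists_le_le_sum_eq {α : Type*} [Fintype α] [DecidableEq α] {y c : α → ℕ}
    (hyc : y ≤ c) {t : ℕ} (hyt : ∑ a, y a ≤ t) (htc : t ≤ ∑ a, c a) :
    ∃ z, y ≤ z ∧ z ≤ c ∧ ∑ a, z a = t := by
  have hsub : ∑ a, (c - y) a = ∑ a, c a - ∑ a, y a :=
    sum_tsub_distrib _ fun a _ => hyc a
  obtain ⟨d, hdc, hdt⟩ := exists_le_sum_eq univ (c - y) (t := t - ∑ a, y a) (by omega)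
  refine ⟨y + d, le_add_of_nonneg_right fun _ => Nat.zero_le _, fun a => ?_, ?_⟩
  · have := hdc a; have := hyc a; simp only [Pi.add_apply, Pi.sub_apply] at *; omega
  · simp only [Pi.add_apply, sum_add_distrib]; omega

section Utility

variable {n : ℕ}

lemma intUtil_mono {x y : Typ n → ℕ} (hxy : x ≤ y) (i : Fin n) : intUtil x i ≤ intUtil y i :=
  sum_le_sum fun R _ => by split_ifs <;> simp [hxy R]

lemma intUtil_nonneg (x : Typ n → ℕ) (i : Fin n) : 0 ≤ intUtil x i :=
  sum_nonneg fun R _ => by split_ifs <;> positivity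

lemma intUtil_eq_sum {x : Typ n → ℕ} {i : Fin n} (hx : ∀ R, x R ≠ 0 → i ∈ R.1) :
    intUtil x i = ∑ R, (x R : ℤ) :=
  sum_congr rfl fun R _ => by
    by_cases hR : x R = 0
    · simp [hR]
    · simp [hx R hR]

lemma fracUtil_le_sum {x : Typ n → ℝ} (hx : 0 ≤ x) (i : Fin n) : fracUtil x i ≤ ∑ R, x R := by
  rw [fracUtil, ← sum_filter]
  exact sum_le_univ_sum_of_nonneg hx

lemma fracUtil_add_le_sum {x : Typ n → ℝ} (hx : 0 ≤ x) {i : Fin n} {R₀ : Typ n}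
    (hR₀ : i ∉ R₀.1) : fracUtil x i + x R₀ ≤ ∑ R, x R := by
  have hmem : R₀ ∉ ({R | i ∈ R.1} : Finset (Typ n)) := by simpa using hR₀
  rw [fracUtil, ← sum_filter, add_comm, ← sum_insert hmem]
  exact sum_le_univ_sum_of_nonneg hx

lemma FracFeasible.le_min_sum {c : Typ n → ℕ} {k : ℕ} {u : Fin n → ℤ} (hu : FracFeasible c k u)
    (i : Fin n) : u i ≤ (min k (∑ R, c R) : ℕ) := by
  obtain ⟨x, ⟨hx0, hxc, hxk⟩, hxu⟩ := hu
  have hui : (u i : ℝ) ≤ ∑ R, x R := (hxu i).trans (fracUtil_le_sum hx0 i)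
  have hxc' : ∑ R, x R ≤ ∑ R, (c R : ℝ) := sum_le_sum fun R _ => hxc R
  have : (u i : ℝ) ≤ min k (∑ R, c R : ℕ) := by
    push_cast
    exact le_min (hui.trans hxk) (hui.trans hxc')
  exact_mod_cast this

lemma IntFeasible.mono {c c' : Typ n → ℕ} (hc : c' ≤ c) {k : ℕ} {u : Fin n → ℤ}
    (hu : IntFeasible c' k u) : IntFeasible c k u :=
  let ⟨x, ⟨hxc, hxk⟩, hxu⟩ := hu
  ⟨x, ⟨fun R => (hxc R).trans (hc R), hxk⟩, hxu⟩

end Utility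

namespace Typ

variable {m : ℕ}

def delete (i : Fin (m + 1)) (S : Typ (m + 1)) : Option (Typ m) :=
  if h : (univ.filter fun j => i.succAbove j ∈ S.1).Nonempty then some ⟨_, h⟩ else none

lemma mem_iff_of_delete_eq_some {i : Fin (m + 1)} {S : Typ (m + 1)} {T : Typ m}
    (h : delete i S = some T) (j : Fin m) : j ∈ T.1 ↔ i.succAbove j ∈ S.1 := by
  unfold delete at h
  split_ifs at h
  cases h
  simp

lemma not_mem_of_delete_eq_none {i : Fin (m + 1)} {S : Typ (m + 1)} (h : delete i S = none)
    (j : Fin m) : i.succAbove j ∉ S.1 := by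
  unfold delete at h
  split_ifs at h with hne
  exact fun hj => hne ⟨j, by simpa using hj⟩

variable {M : Type*} [AddCommMonoid M]

def deleteWeights (i : Fin (m + 1)) (w : Typ (m + 1) → M) (T : Typ m) : M :=
  ∑ S with delete i S = some T, w S

lemma sum_delete_none_add_sum_deleteWeights (i : Fin (m + 1)) (w : Typ (m + 1) → M) :
    ∑ S with delete i S = none, w S + ∑ T, deleteWeights i w T = ∑ S, w S := by
  rw [← sum_fiberwise univ (delete i) w, Fintype.sum_option]
  rfl

lemma sum_ite_succAbove_mem (i : Fin (m + 1)) (w : Typ (m + 1) → M) (j : Fin m) :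
    ∑ S, (if i.succAbove j ∈ S.1 then w S else 0) =
      ∑ T, if j ∈ T.1 then deleteWeights i w T else 0 := by
  rw [← sum_delete_none_add_sum_deleteWeights i,
    sum_eq_zero fun S hS => if_neg (not_mem_of_delete_eq_none (mem_filter.1 hS).2 j), zero_add]
  refine sum_congr rfl fun T _ => ?_
  unfold deleteWeights
  rw [ite_sum_zero]
  exact sum_congr rfl fun S hS => by simp only [mem_iff_of_delete_eq_some (mem_filter.1 hS).2]

lemma fracUtil_deleteWeights (i : Fin (m + 1)) (x : Typ (m + 1) → ℝ) (j : Fin m) :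
    fracUtil (deleteWeights i x) j = fracUtil x (i.succAbove j) :=
  (sum_ite_succAbove_mem i x j).symm

lemma intUtil_deleteWeights (i : Fin (m + 1)) (y : Typ (m + 1) → ℕ) (j : Fin m) :
    intUtil (deleteWeights i y) j = intUtil y (i.succAbove j) := by
  rw [intUtil, intUtil, sum_ite_succAbove_mem]
  simp only [deleteWeights, Nat.cast_sum]

end Typ

open Typ

section DeleteVoter

variable {m : ℕ}

lemma IsFracCommittee.deleteWeights {i : Fin (m + 1)} {c : Typ (m + 1) → ℕ} {k : ℕ}
    {x : Typ (m + 1) → ℝ} (hx : IsFracCommittee c k x) :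
    IsFracCommittee (deleteWeights i c) k (deleteWeights i x) := by
  obtain ⟨hx0, hxc, hxk⟩ := hx
  refine ⟨fun T => sum_nonneg fun S _ => hx0 S, fun T => ?_, ?_⟩
  · rw [Typ.deleteWeights, Typ.deleteWeights, Nat.cast_sum]
    exact sum_le_sum fun S _ => hxc S
  · have := sum_delete_none_add_sum_deleteWeights i x
    have : 0 ≤ ∑ S with delete i S = none, x S := sum_nonneg fun S _ => hx0 S
    linarith

lemma FracFeasible.deleteVoter {i : Fin (m + 1)} {c : Typ (m + 1) → ℕ} {k : ℕ}
    {u : Fin (m + 1) → ℤ} (hu : FracFeasible c k u) :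
    FracFeasible (deleteWeights i c) k (u ∘ i.succAbove) :=
  let ⟨x, hx, hxu⟩ := hu
  ⟨deleteWeights i x, IsFracCommittee.deleteWeights hx, fun j => by
    simpa [fracUtil_deleteWeights] using hxu (i.succAbove j)⟩

lemma exists_le_deleteWeights_eq {i : Fin (m + 1)} {c : Typ (m + 1) → ℕ} {y' : Typ m → ℕ}
    (hy' : y' ≤ deleteWeights i c) :
    ∃ y ≤ c, deleteWeights i y = y' ∧ ∑ S, y S = ∑ T, y' T := by
  choose yf hyfc hyf using fun T => exists_le_sum_eq {S | delete i S = some T} c (hy' T)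
  let y S := (delete i S).elim 0 fun T => yf T S
  have hy : ∀ S T, delete i S = some T → y S = yf T S := fun S T h => by simp [y, h]
  have hdel : deleteWeights i y = y' := funext fun T => by
    rw [← hyf T]
    exact sum_congr rfl fun S hS => hy S T (mem_filter.1 hS).2
  refine ⟨y, fun S => ?_, hdel, ?_⟩
  · cases h : delete i S with
    | none => simp [y, h]
    | some T => rw [hy S T h]; exact hyfc T S
  · rw [← sum_delete_none_add_sum_deleteWeights i y, hdel,
      sum_eq_zero fun S hS => by simp [y, (mem_filter.1 hS).2], zero_add]

lemma exists_intCommittee_forall_ne {i : Fin (m + 1)} {c : Typ (m + 1) → ℕ} {k : ℕ}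
    {u : Fin (m + 1) → ℤ} (hI : Integralizable (deleteWeights i c) k) (hu : FracFeasible c k u) :
    ∃ y, IsIntCommittee c k y ∧ ∀ j ≠ i, u j ≤ intUtil y j := by
  obtain ⟨y', ⟨hy'c, hy'k⟩, hy'u⟩ := hI _ hu.deleteVoter
  obtain ⟨y, hyc, hdel, hsum⟩ := exists_le_deleteWeights_eq hy'c
  refine ⟨y, ⟨hyc, hsum ▸ hy'k⟩, fun j hj => ?_⟩
  obtain ⟨j, rfl⟩ := Fin.exists_succAbove_eq hj
  simpa [← intUtil_deleteWeights, hdel] using hy'u j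

end DeleteVoter

section MinimalCounterexample

variable {m : ℕ} {c : Typ (m + 1) → ℕ} {k : ℕ} {u : Fin (m + 1) → ℤ}

lemma Counterexample.exists_pos_not_mem (h : Counterexample c k u) (i : Fin (m + 1))
    (hI : Integralizable (deleteWeights i c) k) : ∃ R, 0 < c R ∧ i ∉ R.1 := by
  by_contra! hA
  obtain ⟨hfrac, hint⟩ := h
  obtain ⟨y, ⟨hyc, hyk⟩, hyu⟩ := exists_intCommittee_forall_ne hI hfrac
  obtain ⟨z, hyz, hzc, hz⟩ := exists_le_le_sum_eq hyc (t := min k (∑ R, c R))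
    (le_min hyk (sum_le_sum fun R _ => hyc R)) (min_le_right _ _)
  refine hint ⟨z, ⟨hzc, hz ▸ min_le_left _ _⟩, fun j => ?_⟩
  rcases eq_or_ne j i with rfl | hj
  · have hzj : intUtil z j = (min k (∑ R, c R) : ℕ) := by
      have hz0 (R : Typ (m + 1)) (hR : z R ≠ 0) : j ∈ R.1 :=
        hA R (by have : z R ≤ c R := hzc R; omega)
      rw [intUtil_eq_sum (hz0 ·), ← hz, Nat.cast_sum]
    exact hzj ▸ hfrac.le_min_sum j
  · exact (hyu j hj).trans (intUtil_mono hyz j)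

lemma Counterexample.one_le (h : Counterexample c k u) (i : Fin (m + 1))
    (hI : Integralizable (deleteWeights i c) k) : 1 ≤ u i := by
  by_contra! hi
  obtain ⟨y, hy, hyu⟩ := exists_intCommittee_forall_ne hI h.1
  refine h.2 ⟨y, hy, fun j => ?_⟩
  rcases eq_or_ne j i with rfl | hj
  · exact (by omega : u j ≤ 0).trans (intUtil_nonneg y j)
  · exact hyu j hj

end MinimalCounterexample

lemma MinimalCE.le_sub_one {n : ℕ} {c : Typ n → ℕ} {k : ℕ} {u : Fin n → ℤ} (h : MinimalCE c k u)
    {i : Fin n} {R₀ : Typ n} (hR₀c : 0 < c R₀) (hR₀ : i ∉ R₀.1) : u i ≤ k - 1 := by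
  by_contra! hi
  obtain ⟨⟨⟨x, ⟨hx0, hxc, hxk⟩, hxu⟩, hint⟩, -, hminc⟩ := h
  have hxR₀ : x R₀ ≤ 0 := by
    have hki : (k : ℝ) ≤ u i := by exact_mod_cast (by omega : (k : ℤ) ≤ u i)
    linarith [fracUtil_add_le_sum hx0 hR₀, hxu i]
  have hle : Function.update c R₀ 0 ≤ c := fun R => by
    rcases eq_or_ne R R₀ with rfl | hR <;> simp [*]
  refine hminc _ hle ⟨R₀, by simpa using hR₀c⟩ u
    ⟨⟨x, ⟨hx0, fun R => ?_, hxk⟩, hxu⟩, fun hu => hint (hu.mono hle)⟩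
  rcases eq_or_ne R R₀ with rfl | hR
  · simpa using hxR₀
  · simpa [hR] using hxc R

theorem stmt7 (n : ℕ) (c : Typ n → ℕ) (k : ℕ) (u : Fin n → ℤ)
    (hprev : ∀ (c' : Typ (n - 1) → ℕ) (k' : ℕ), Integralizable c' k')
    (h : MinimalCE c k u) :
    (∀ i : Fin n, ∃ R : Typ n, 0 < c R ∧ i ∉ R.1) ∧
    (∀ i : Fin n, 1 ≤ u i ∧ u i ≤ (k : ℤ) - 1) := by
  cases n with
  | zero => exact ⟨fun i => i.elim0, fun i => i.elim0⟩
  | succ m =>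
    have hA (i : Fin (m + 1)) : ∃ R, 0 < c R ∧ i ∉ R.1 :=
      h.1.exists_pos_not_mem i (hprev _ k)
    refine ⟨hA, fun i => ⟨h.1.one_le i (hprev _ k), ?_⟩⟩
    obtain ⟨R, hRc, hRi⟩ := hA i
    exact h.le_sub_one hRc hRi
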